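/- arXiv:1107.2720 — 2 statements merged into one kernel-verified Lean document; each statement's English description precedes it below -/
import Mathlib

section
/- For every t > 0, the nine vectors ψ_k ⊗ φ_k (k = 1,…,9) are linearly independent, hence span ℂ⁹ ≅ ℂ³ ⊗ ℂ³. -/
/-!
Write `s = √t` and order the coordinates of `ℂ³ ⊗ ℂ³` as pairs `(i, j)`. In a vanishing combination
`∑ cₖ ψₖ ⊗ φₖ`, the off-diagonal coordinates come in pairs `(i, j), (j, i)` that involve only
`c₁, c₂, c₃` and one pair of coefficients `(c₄, c₅)`, `(c₆, c₇)` or `(c₈, c₉)`. Each such pair of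
equations expresses the sum of its two coefficients through `c₁, c₂, c₃`, while the diagonal
coordinates force the three sums to agree and fix `c₁ + c₂ + c₃`. What is left is a `3 × 3` system
for `c₁, c₂, c₃` whose determinant is, up to a unit, `(s² + 1)(s² + i)(2s² - (1 + i)s + 2i)`, and
none of these factors vanishes at a real `s`. Once `c₁ = c₂ = c₃ = 0`, each pair of equations kills
its own two coefficients.
-/

open Complex

/-- `s t` is the positive square root of `t`, as a complex number. -/
noncomputable def rt (t : ℝ) : ℂ := (Real.sqrt t : ℂ)

/-- The vectors ψ₁,…,ψ₉ in ℂ³ (indexed by `Fin 9`). -/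
noncomputable def psi (t : ℝ) : Fin 9 → Fin 3 → ℂ :=
  ![![1, 1, 1],
    ![1, -1, 1],
    ![1, Complex.I, -Complex.I],
    ![0, rt t, 1],
    ![0, rt t, Complex.I],
    ![1, 0, rt t],
    ![Complex.I, 0, rt t],
    ![rt t, 1, 0],
    ![rt t, Complex.I, 0]]

/-- The vectors φ₁,…,φ₉ in ℂ³ (indexed by `Fin 9`). -/
noncomputable def phi (t : ℝ) : Fin 9 → Fin 3 → ℂ :=
  ![![1, 1, 1],
    ![1, -1, 1],
    ![1, -Complex.I, Complex.I],
    ![0, rt t, (t : ℂ)],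
    ![0, rt t, -(t : ℂ) * Complex.I],
    ![(t : ℂ), 0, rt t],
    ![-(t : ℂ) * Complex.I, 0, rt t],
    ![rt t, (t : ℂ), 0],
    ![rt t, -(t : ℂ) * Complex.I, 0]]

/-- Kronecker product of two vectors in ℂ³, as a vector in ℂ⁹,
with the standard ordering `(i,j) ↦ 3*i + j`. -/
def kron9 (ψ φ : Fin 3 → ℂ) : Fin 9 → ℂ :=
  fun r => ψ ⟨r.val / 3, by omega⟩ * φ ⟨r.val % 3, by omega⟩

/-- Field `eij` is coordinate `(i, j)`, i.e. index `3 * i + j`, of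
`∑ k, c k • kron9 (psi t k) (phi t k)`, written with `s = √t` and `t = s ^ 2`;
`c k` is the coefficient of `ψₖ₊₁ ⊗ φₖ₊₁`. -/
structure KronSystem (s : ℂ) (c : Fin 9 → ℂ) : Prop where
  e00 : c 0 + c 1 + c 2 + s ^ 2 * (c 5 + c 6 + c 7 + c 8) = 0
  e01 : c 0 - c 1 - I * c 2 + s ^ 3 * (c 7 - I * c 8) = 0
  e02 : c 0 + c 1 + I * c 2 + s * (c 5 + I * c 6) = 0
  e10 : c 0 - c 1 + I * c 2 + s * (c 7 + I * c 8) = 0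
  e11 : c 0 + c 1 + c 2 + s ^ 2 * (c 3 + c 4 + c 7 + c 8) = 0
  e12 : c 0 - c 1 - c 2 + s ^ 3 * (c 3 - I * c 4) = 0
  e20 : c 0 + c 1 - I * c 2 + s ^ 3 * (c 5 - I * c 6) = 0
  e21 : c 0 - c 1 - c 2 + s * (c 3 + I * c 4) = 0
  e22 : c 0 + c 1 + c 2 + s ^ 2 * (c 3 + c 4 + c 5 + c 6) = 0

lemma kronSystem_of_sum_eq_zero {t : ℝ} (ht : 0 ≤ t) {c : Fin 9 → ℂ}
    (hc : ∑ k, c k • kron9 (psi t k) (phi t k) = 0) : KronSystem (rt t) c := by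
  have hs : rt t ^ 2 = t := by
    rw [rt, ← ofReal_pow, Real.sq_sqrt ht]
  rw [funext_iff] at hc
  simp only [Fin.forall_fin_succ, forall_const, Finset.sum_apply, Fin.sum_univ_succ,
    Pi.smul_apply, Pi.zero_apply, kron9, psi, phi, ← hs, Matrix.cons_val, Fin.reduceSucc,
    Fin.reduceFinMk, Fin.val_succ, Fin.val_eq_zero, Fin.coe_ofNat_eq_mod, Nat.reduceAdd, Nat.reduceDiv,
    Nat.reduceMod, neg_mul, mul_neg, I_mul_I] at hc
  obtain ⟨e00, e01, e02, e10, e11, e12, e20, e21, e22⟩ := hc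
  exact ⟨by linear_combination e00 + rt t ^ 2 * c 6 * I_sq, by linear_combination e01,
    by linear_combination e02, by linear_combination e10,
    by linear_combination e11 + rt t ^ 2 * c 8 * I_sq, by linear_combination e12,
    by linear_combination e20, by linear_combination e21,
    by linear_combination e22 + rt t ^ 2 * c 4 * I_sq⟩

lemma pair_sum_eq {s a b P Q : ℂ} (h₁ : P + s ^ 3 * (a - I * b) = 0)
    (h₂ : Q + s * (a + I * b) = 0) :
    (1 + I) * P + (1 - I) * s ^ 2 * Q = -2 * s ^ 3 * (a + b) := by
  linear_combination (1 + I) * h₁ + (1 - I) * s ^ 2 * h₂ + 2 * s ^ 3 * b * I_sq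

lemma pair_eq_zero {s a b : ℂ} (hs : s ≠ 0) (h₁ : s ^ 3 * (a - I * b) = 0)
    (h₂ : s * (a + I * b) = 0) : a = 0 ∧ b = 0 := by
  have hm : a - I * b = 0 := (mul_eq_zero.mp h₁).resolve_left (pow_ne_zero 3 hs)
  have hp : a + I * b = 0 := (mul_eq_zero.mp h₂).resolve_left hs
  have hb : b = 0 := by
    have : 2 * I * b = 0 := by linear_combination hp - hm
    simpa [I_ne_zero] using this
  exact ⟨by linear_combination hp - I * hb, hb⟩

lemma ofReal_sq_add_one_ne_zero (r : ℝ) : (r : ℂ) ^ 2 + 1 ≠ 0 := by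
  exact_mod_cast (by positivity : r ^ 2 + 1 ≠ 0)

lemma ofReal_sq_add_I_ne_zero (r : ℝ) : (r : ℂ) ^ 2 + I ≠ 0 := fun h => by
  simpa [sq] using congrArg im h

lemma two_ofReal_sq_sub_add_ne_zero (r : ℝ) : 2 * (r : ℂ) ^ 2 - (1 + I) * r + 2 * I ≠ 0 := by
  intro h
  have hre : 2 * (r * r) - r = 0 := by simpa [sq] using congrArg re h
  have him : -r + 2 = 0 := by simpa [sq] using congrArg im h
  obtain rfl : r = 2 := by linarith
  norm_num at hre

namespace KronSystem

variable {r : ℝ} {c : Fin 9 → ℂ}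

theorem head_eq_zero (hr : r ≠ 0) (h : KronSystem r c) : c 0 = 0 ∧ c 1 = 0 ∧ c 2 = 0 := by
  set s : ℂ := (r : ℂ)
  have hs : s ^ 2 ≠ 0 := pow_ne_zero 2 (ofReal_ne_zero.mpr hr)
  have sum56 : c 5 + c 6 - (c 3 + c 4) = 0 :=
    (mul_eq_zero.mp (by linear_combination h.e00 - h.e11)).resolve_left hs
  have sum78 : c 7 + c 8 - (c 5 + c 6) = 0 :=
    (mul_eq_zero.mp (by linear_combination h.e11 - h.e22)).resolve_left hs
  have eq34 : s * (c 0 + c 1 + c 2) =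
      (1 + I) * (c 0 - c 1 - c 2) + (1 - I) * s ^ 2 * (c 0 - c 1 - c 2) := by
    linear_combination s * h.e22 - pair_sum_eq h.e12 h.e21 - s ^ 3 * sum56
  have eq56 : s * (c 0 + c 1 + c 2) =
      (1 + I) * (c 0 + c 1 - I * c 2) + (1 - I) * s ^ 2 * (c 0 + c 1 + I * c 2) := by
    linear_combination s * h.e22 - pair_sum_eq h.e20 h.e02 + s ^ 3 * sum56
  have eq78 : s * (c 0 + c 1 + c 2) =
      (1 + I) * (c 0 - c 1 - I * c 2) + (1 - I) * s ^ 2 * (c 0 - c 1 + I * c 2) := by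
    linear_combination s * h.e22 - pair_sum_eq h.e01 h.e10 + s ^ 3 * sum56 + 2 * s ^ 3 * sum78
  have hc1 : c 1 = 0 := by
    have : 2 * (s ^ 2 + I) * c 1 = 0 := by
      linear_combination (1 + I) / 2 * (eq78 - eq56) + (s ^ 2 - 1) * c 1 * I_sq
    simpa [ofReal_sq_add_I_ne_zero, s] using this
  have hc2 : c 2 = 0 := by
    have : 2 * (s ^ 2 + 1) * c 2 = 0 := by
      linear_combination eq34 - eq78 + (s ^ 2 + 1) * c 2 * I_sq
    simpa [ofReal_sq_add_one_ne_zero, s] using this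
  have hc0 : c 0 = 0 := by
    rw [hc1, hc2] at eq34
    have : (2 * s ^ 2 - (1 + I) * s + 2 * I) * c 0 = 0 := by
      linear_combination -(1 + I) * eq34 + (s ^ 2 - 1) * c 0 * I_sq
    simpa [two_ofReal_sq_sub_add_ne_zero, s] using this
  exact ⟨hc0, hc1, hc2⟩

theorem eq_zero (hr : r ≠ 0) (h : KronSystem r c) : c = 0 := by
  have hs : (r : ℂ) ≠ 0 := ofReal_ne_zero.mpr hr
  obtain ⟨hc0, hc1, hc2⟩ := h.head_eq_zero hr
  obtain ⟨hc3, hc4⟩ := pair_eq_zero (a := c 3) (b := c 4) hs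
    (by linear_combination h.e12 - hc0 + hc1 + hc2) (by linear_combination h.e21 - hc0 + hc1 + hc2)
  obtain ⟨hc5, hc6⟩ := pair_eq_zero (a := c 5) (b := c 6) hs
    (by linear_combination h.e20 - hc0 - hc1 + I * hc2)
    (by linear_combination h.e02 - hc0 - hc1 - I * hc2)
  obtain ⟨hc7, hc8⟩ := pair_eq_zero (a := c 7) (b := c 8) hs
    (by linear_combination h.e01 - hc0 + hc1 + I * hc2)
    (by linear_combination h.e10 - hc0 + hc1 - I * hc2)
  ext k
  fin_cases k <;> simp [hc0, hc1, hc2, hc3, hc4, hc5, hc6, hc7, hc8]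

end KronSystem

theorem stmt_7 (t : ℝ) (ht : 0 < t) :
    LinearIndependent ℂ (fun k : Fin 9 => kron9 (psi t k) (phi t k)) ∧
      Submodule.span ℂ
        (Set.range fun k : Fin 9 => kron9 (psi t k) (phi t k)) = ⊤ := by
  have hli : LinearIndependent ℂ (fun k : Fin 9 => kron9 (psi t k) (phi t k)) :=
    Fintype.linearIndependent_iff.mpr fun c hc =>
      congrFun ((kronSystem_of_sum_eq_zero ht.le hc).eq_zero (Real.sqrt_pos.mpr ht).ne')
  exact ⟨hli, hli.span_eq_top_of_card_eq_finrank (by simp)⟩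
end

section
/- Let t > 0 and let a, b, c be reals with a + b·t = 1 and c + a·t = t. Then for each k = 1,…,9, the vector ψ_k ⊗ conj(φ_k) satisfies ⟨ψ_k ⊗ conj(φ_k) | (6·W[a,b,c])^Γ | ψ_k ⊗ conj(φ_k)⟩ = 0, where Γ denotes partial transposition with respect to the second tensor factor, provided also a + b + c = 2. -/
open Complex

/-- Kronecker product of vectors in ℂ³, as a vector indexed by pairs. -/
def kronP (ψ φ : Fin 3 → ℂ) : Fin 3 × Fin 3 → ℂ := fun p => ψ p.1 * φ p.2

/-- The matrix `6·W[a,b,c]`: the (unnormalized) generalized Choi entanglement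
witness, indexed by pairs in `{0,1,2}²`. -/
def W6 (a b c : ℝ) : Matrix (Fin 3 × Fin 3) (Fin 3 × Fin 3) ℂ :=
  Matrix.of fun p q =>
    if p = q then
      (if p.2 = p.1 then (a : ℂ) else if p.2 = p.1 + 1 then (b : ℂ) else (c : ℂ))
    else if p.1 = p.2 ∧ q.1 = q.2 then -1 else 0

/-- Partial transposition with respect to the second tensor factor. -/
def PT3 (W : Matrix (Fin 3 × Fin 3) (Fin 3 × Fin 3) ℂ) :
    Matrix (Fin 3 × Fin 3) (Fin 3 × Fin 3) ℂ :=
  Matrix.of fun p q => W (p.1, q.2) (q.1, p.2)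

/-!
The partial transpose of `6·W[a,b,c]` is its diagonal minus the swap `(i,j) ↦ (j,i)` restricted
to the off-diagonal pairs. Hence on a product vector `ψ ⊗ conj φ` the expectation value is the
real number `∑ d_ij |ψ_i|² |φ_j|² + ∑ |ψ_i φ_i|² - |∑ ψ_i φ_i|²`, where `d_ij` is the diagonal
coefficient of `W` at `(i,j)`. For `k = 1, 2, 3` all entries are unimodular and `∑ ψ_i φ_i = 3`,
giving `3(a + b + c) - 6`; for `k = 4, …, 9` the vectors live on two coordinates and the value is
`t² (a + b t - 1) + t (c + a t - t)`.
-/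

open Matrix

def choiDiag (a b c : ℝ) (p : Fin 3 × Fin 3) : ℝ :=
  if p.2 = p.1 then a else if p.2 = p.1 + 1 then b else c

def offDiagSwap : Matrix (Fin 3 × Fin 3) (Fin 3 × Fin 3) ℂ :=
  of fun p q => if p.1 ≠ p.2 ∧ q = p.swap then 1 else 0

lemma PT3_W6 (a b c : ℝ) :
    PT3 (W6 a b c) = diagonal (fun p => (choiDiag a b c p : ℂ)) - offDiagSwap := by
  ext ⟨i, j⟩ ⟨k, l⟩
  simp only [PT3, W6, choiDiag, offDiagSwap, diagonal_apply, of_apply, Matrix.sub_apply,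
    Prod.mk.injEq, Prod.swap_prod_mk]
  grind

lemma offDiagSwap_mulVec (x : Fin 3 × Fin 3 → ℂ) (p : Fin 3 × Fin 3) :
    (offDiagSwap *ᵥ x) p = if p.1 ≠ p.2 then x p.swap else 0 := by
  simp only [offDiagSwap, mulVec, dotProduct, of_apply, ite_and, ite_mul, one_mul, zero_mul]
  split_ifs <;> simp

lemma star_dotProduct_PT3_W6_mulVec (a b c : ℝ) (x : Fin 3 × Fin 3 → ℂ) :
    star x ⬝ᵥ (PT3 (W6 a b c) *ᵥ x) =
      ∑ p, (choiDiag a b c p * normSq (x p) : ℂ)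
        - ∑ p, if p.1 ≠ p.2 then starRingEnd ℂ (x p) * x p.swap else 0 := by
  rw [PT3_W6, sub_mulVec, dotProduct_sub]
  congr 1 <;> refine Finset.sum_congr rfl fun p _ => ?_
  · rw [mulVec_diagonal, Pi.star_apply, RCLike.star_def, mul_left_comm, normSq_eq_conj_mul_self]
  · rw [offDiagSwap_mulVec, Pi.star_apply, RCLike.star_def, mul_ite, mul_zero]

def choiForm (a b c : ℝ) (ψ φ : Fin 3 → ℂ) : ℝ :=
  ∑ p : Fin 3 × Fin 3, choiDiag a b c p * normSq (ψ p.1) * normSq (φ p.2)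
    + ∑ i, normSq (ψ i * φ i) - normSq (∑ i, ψ i * φ i)

lemma star_dotProduct_PT3_W6_mulVec_kronP (a b c : ℝ) (ψ φ : Fin 3 → ℂ) :
    star (kronP ψ fun i => starRingEnd ℂ (φ i)) ⬝ᵥ
        (PT3 (W6 a b c) *ᵥ kronP ψ fun i => starRingEnd ℂ (φ i)) =
      choiForm a b c ψ φ := by
  rw [star_dotProduct_PT3_W6_mulVec, choiForm]
  simp only [ofReal_sub, ofReal_add, ofReal_mul, normSq_eq_conj_mul_self, kronP,
    Fintype.sum_prod_type, Fin.sum_univ_three, map_mul, map_add, conj_conj, Prod.swap_prod_mk,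
    ne_eq, not_true_eq_false, not_false_eq_true, ↓reduceIte, Fin.reduceEq]
  ring

lemma normSq_rt {t : ℝ} (ht : 0 ≤ t) : normSq (rt t) = t := by
  rw [rt, normSq_ofReal, Real.mul_self_sqrt ht]

lemma rt_mul_self {t : ℝ} (ht : 0 ≤ t) : rt t * rt t = t := by
  rw [rt, ← ofReal_mul, Real.mul_self_sqrt ht]

lemma choiForm_psi_phi {t : ℝ} (ht : 0 ≤ t) {a b c : ℝ}
    (h1 : a + b * t = 1) (h2 : c + a * t = t) (hsum : a + b + c = 2) (k : Fin 9) :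
    choiForm a b c (psi t k) (phi t k) = 0 := by
  fin_cases k <;>
  simp only [choiForm, choiDiag, psi, phi, Fintype.sum_prod_type, Fin.sum_univ_three,
    Fin.reduceFinMk, Fin.reduceEq, Fin.reduceAdd, cons_val, ↓reduceIte, map_zero, normSq_rt ht,
    rt_mul_self ht, zero_mul, zero_add] <;>
  simp only [normSq_apply, add_re, add_im, neg_re, neg_im, mul_re, mul_im, I_re, I_im, ofReal_re,
    ofReal_im, one_re, one_im, add_zero] <;>
  first | linear_combination 3 * hsum | linear_combination t ^ 2 * h1 + t * h2

theorem stmt_10 (t : ℝ) (ht : 0 < t) (a b c : ℝ)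
    (h1 : a + b * t = 1) (h2 : c + a * t = t) (hsum : a + b + c = 2) (k : Fin 9) :
    dotProduct
      (star (kronP (psi t k) (fun i => starRingEnd ℂ (phi t k i))))
      ((PT3 (W6 a b c)).mulVec
        (kronP (psi t k) (fun i => starRingEnd ℂ (phi t k i)))) = 0 := by
  rw [star_dotProduct_PT3_W6_mulVec_kronP, choiForm_psi_phi ht.le h1 h2 hsum k, ofReal_zero]
end
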